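/- Let T : X → X be a continuous map of a compact metric space, μ a T-invariant Borel probability measure, and U a finite Borel cover of X. Then h_μ⁻(T, U) ≤ h_top(T, U), where h_μ⁻(T,U) = lim_n (1/n) H_μ(⋁_{i=0}^{n-1}T⁻ⁱU) and h_top(T,U) = lim_n (1/n) log N(⋁_{i=0}^{n-1}T⁻ⁱU). -/

import Mathlib

/-! Fix `n` and a minimal subcover `F` of `W = ⋁_{i<n} T⁻ⁱU`, so `#F = N(W)`. Disjointifying an
enumeration of `F` gives a Borel partition refining `W` with at most `N(W)` cells, and by Jensen's
inequality for the concave function `x ↦ -x log x` its entropy is at most `log N(W)`. Hence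
`H_μ(W)/n ≤ log N(W)/n` for every `n`, and the inequality passes to the limits. -/

open MeasureTheory Set Filter Topology

noncomputable section

/-- `U` is a cover of the whole space. -/
def IsCover {X : Type*} (U : Finset (Set X)) : Prop := ⋃₀ (U : Set (Set X)) = Set.univ

/-- `R` refines `U`: every element of `R` is contained in some element of `U`. -/
def Refines {X : Type*} (R U : Finset (Set X)) : Prop := ∀ A ∈ R, ∃ B ∈ U, A ⊆ B

/-- `R` is a partition of the whole space. -/
def IsPartition {X : Type*} (R : Finset (Set X)) : Prop :=
  IsCover R ∧ ∀ A ∈ R, ∀ B ∈ R, A ≠ B → Disjoint A B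

/-- `R` is a partition into Borel (measurable) sets. -/
def IsBorelPartition {X : Type*} [MeasurableSpace X] (R : Finset (Set X)) : Prop :=
  IsPartition R ∧ ∀ A ∈ R, MeasurableSet A

/-- Join of two finite families of sets: `U ∨ V = {A ∩ B}`. -/
def coverJoin {X : Type*} (U V : Finset (Set X)) : Finset (Set X) :=
  letI := Classical.decEq (Set X)
  (U ×ˢ V).image fun p => p.1 ∩ p.2

/-- Preimage of a finite family of sets under a map. -/
def coverPre {Y X : Type*} (g : Y → X) (U : Finset (Set X)) : Finset (Set Y) :=
  letI := Classical.decEq (Set Y)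
  U.image fun A => g ⁻¹' A

/-- `dynJoin T U n = ⋁_{i=0}^{n-1} T⁻ⁱ U`. -/
def dynJoin {X : Type*} (T : X → X) (U : Finset (Set X)) : ℕ → Finset (Set X)
  | 0 => {Set.univ}
  | n + 1 => coverJoin (dynJoin T U n) (coverPre (T^[n]) U)

/-- Minimal cardinality of a subcover of `W`. -/
def coverNum {X : Type*} (W : Finset (Set X)) : ℕ :=
  sInf {n | ∃ F : Finset (Set X), F ⊆ W ∧ F.card = n ∧ ⋃₀ (F : Set (Set X)) = Set.univ}

/-- Shannon entropy of a finite family of sets (convention `0 log 0 = 0`). -/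
def partEnt {X : Type*} [MeasurableSpace X] (μ : Measure X) (R : Finset (Set X)) : ℝ :=
  -∑ A ∈ R, (μ A).toReal * Real.log (μ A).toReal

/-- Entropy of a cover: infimum of entropies of Borel partitions refining it. -/
def coverEnt {X : Type*} [MeasurableSpace X] (μ : Measure X) (U : Finset (Set X)) : ℝ :=
  sInf {h | ∃ R : Finset (Set X), IsBorelPartition R ∧ Refines R U ∧ h = partEnt μ R}

end

open Real in
lemma Real.sum_negMulLog_le_log_card {ι : Type*} {s : Finset ι} {p : ι → ℝ}
    (hp : ∀ i ∈ s, 0 ≤ p i) (hsum : ∑ i ∈ s, p i = 1) :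
    ∑ i ∈ s, negMulLog (p i) ≤ log s.card := by
  have hcard : (0 : ℝ) < s.card := by
    rcases s.eq_empty_or_nonempty with rfl | hs
    · simp at hsum
    · exact_mod_cast hs.card_pos
  have hjensen := concaveOn_negMulLog.le_map_sum (t := s) (w := fun _ => (s.card : ℝ)⁻¹)
    (fun _ _ => by positivity) (by simp [hcard.ne']) hp
  have hval : negMulLog (s.card : ℝ)⁻¹ = (s.card : ℝ)⁻¹ * log s.card := by
    simp [negMulLog, log_inv]
  simp only [smul_eq_mul, ← Finset.mul_sum, hsum, mul_one, hval] at hjensen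
  exact le_of_mul_le_mul_left hjensen (inv_pos.2 hcard)

section Covers

variable {X : Type*}

lemma mem_coverJoin {U V : Finset (Set X)} {A : Set X} :
    A ∈ coverJoin U V ↔ ∃ B ∈ U, ∃ C ∈ V, B ∩ C = A := by
  simp only [coverJoin, Finset.mem_image, Finset.mem_product, Prod.exists, exists_and_left,
    and_assoc]

lemma mem_coverPre {Y : Type*} {g : Y → X} {U : Finset (Set X)} {A : Set Y} :
    A ∈ coverPre g U ↔ ∃ B ∈ U, g ⁻¹' B = A := by
  simp [coverPre]

lemma Refines.trans {R V W : Finset (Set X)} (hRV : Refines R V) (hVW : Refines V W) :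
    Refines R W := fun A hA =>
  let ⟨B, hB, hAB⟩ := hRV A hA
  let ⟨C, hC, hBC⟩ := hVW B hB
  ⟨C, hC, hAB.trans hBC⟩

lemma Refines.of_subset {V W : Finset (Set X)} (h : V ⊆ W) : Refines V W :=
  fun A hA => ⟨A, h hA, subset_rfl⟩

lemma IsCover.coverJoin {U V : Finset (Set X)} (hU : IsCover U) (hV : IsCover V) :
    IsCover (coverJoin U V) := by
  refine eq_univ_of_forall fun x => ?_
  obtain ⟨A, hA, hxA⟩ := eq_univ_iff_forall.1 hU x
  obtain ⟨B, hB, hxB⟩ := eq_univ_iff_forall.1 hV x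
  exact ⟨A ∩ B, mem_coverJoin.2 ⟨A, hA, B, hB, rfl⟩, hxA, hxB⟩

lemma IsCover.coverPre {Y : Type*} (g : Y → X) {U : Finset (Set X)} (hU : IsCover U) :
    IsCover (coverPre g U) := by
  refine eq_univ_of_forall fun y => ?_
  obtain ⟨A, hA, hyA⟩ := eq_univ_iff_forall.1 hU (g y)
  exact ⟨g ⁻¹' A, mem_coverPre.2 ⟨A, hA, rfl⟩, hyA⟩

lemma IsCover.dynJoin {U : Finset (Set X)} (hU : IsCover U) (T : X → X) (n : ℕ) :
    IsCover (dynJoin T U n) := by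
  induction n with
  | zero => simp [_root_.dynJoin, IsCover]
  | succ n ih => exact ih.coverJoin (hU.coverPre _)

lemma exists_subcover_card_eq_coverNum {W : Finset (Set X)} (hW : IsCover W) :
    ∃ F ⊆ W, F.card = coverNum W ∧ IsCover F := by
  obtain ⟨F, hFW, hF, hFc⟩ := Nat.sInf_mem (⟨W.card, W, subset_rfl, rfl, hW⟩ :
    {n | ∃ F : Finset (Set X), F ⊆ W ∧ F.card = n ∧ ⋃₀ (F : Set (Set X)) = univ}.Nonempty)
  exact ⟨F, hFW, hF, hFc⟩

section Measure

variable [MeasurableSpace X]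

lemma measurableSet_of_mem_dynJoin {T : X → X} (hT : Measurable T) {U : Finset (Set X)}
    (hU : ∀ A ∈ U, MeasurableSet A) (n : ℕ) : ∀ A ∈ dynJoin T U n, MeasurableSet A := by
  induction n with
  | zero => simp [dynJoin]
  | succ n ih =>
    simp only [dynJoin, mem_coverJoin, mem_coverPre]
    rintro _ ⟨B, hB, _, ⟨C, hC, rfl⟩, rfl⟩
    exact (ih B hB).inter (hT.iterate n (hU C hC))

lemma exists_isBorelPartition_refines_card_le {F : Finset (Set X)} (hF : IsCover F)
    (hFm : ∀ A ∈ F, MeasurableSet A) :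
    ∃ R, IsBorelPartition R ∧ Refines R F ∧ R.card ≤ F.card := by
  classical
  set f : Fin F.card → Set X := fun i => F.equivFin.symm i
  have hf : ∀ i, f i ∈ F := fun i => (F.equivFin.symm i).2
  refine ⟨Finset.univ.image (disjointed f), ⟨⟨?_, ?_⟩, ?_⟩, ?_, ?_⟩
  · have hrange : range f = F := by
      rw [show f = Subtype.val ∘ F.equivFin.symm from rfl, range_comp,
        F.equivFin.symm.range_eq_univ, image_univ, Subtype.range_coe]
    rw [IsCover]
    simp only [Finset.coe_image, Finset.coe_univ, image_univ]
    rw [sUnion_range, iUnion_disjointed, ← sUnion_range, hrange, hF]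
  · simp only [Finset.mem_image, Finset.mem_univ, true_and]
    rintro _ ⟨i, rfl⟩ _ ⟨j, rfl⟩ hij
    exact disjoint_disjointed f fun h => hij (h ▸ rfl)
  · simp only [Finset.mem_image, Finset.mem_univ, true_and]
    rintro _ ⟨i, rfl⟩
    exact disjointedRec (fun _ j ht => ht.diff (hFm _ (hf j))) (hFm _ (hf i))
  · simp only [Refines, Finset.mem_image, Finset.mem_univ, true_and]
    rintro _ ⟨i, rfl⟩
    exact ⟨f i, hf i, disjointed_subset f i⟩
  · exact Finset.card_image_le.trans (by simp)

lemma IsBorelPartition.sum_measureReal (μ : Measure X) [IsFiniteMeasure μ]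
    {R : Finset (Set X)} (hR : IsBorelPartition R) : ∑ A ∈ R, μ.real A = μ.real univ := by
  obtain ⟨⟨hcover, hdisj⟩, hmeas⟩ := hR
  rw [← measureReal_biUnion_finset (fun A hA B hB hAB => hdisj A hA B hB hAB) hmeas,
    ← Finset.set_biUnion_coe, ← sUnion_eq_biUnion, hcover]

lemma partEnt_eq_sum_negMulLog (μ : Measure X) (R : Finset (Set X)) :
    partEnt μ R = ∑ A ∈ R, Real.negMulLog (μ.real A) := by
  simp [partEnt, Real.negMulLog, measureReal_def]

variable (μ : Measure X) [IsProbabilityMeasure μ]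

lemma partEnt_nonneg (R : Finset (Set X)) : 0 ≤ partEnt μ R := by
  rw [partEnt_eq_sum_negMulLog]
  exact Finset.sum_nonneg fun A _ => Real.negMulLog_nonneg measureReal_nonneg measureReal_le_one

lemma IsBorelPartition.partEnt_le_log_card {R : Finset (Set X)} (hR : IsBorelPartition R) :
    partEnt μ R ≤ Real.log R.card := by
  rw [partEnt_eq_sum_negMulLog]
  exact Real.sum_negMulLog_le_log_card (fun _ _ => measureReal_nonneg)
    (by rw [hR.sum_measureReal μ, probReal_univ])

lemma coverEnt_le_partEnt {R W : Finset (Set X)} (hR : IsBorelPartition R) (hRW : Refines R W) :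
    coverEnt μ W ≤ partEnt μ R :=
  csInf_le ⟨0, by rintro _ ⟨R', -, -, rfl⟩; exact partEnt_nonneg μ R'⟩ ⟨R, hR, hRW, rfl⟩

lemma coverEnt_le_log_coverNum {W : Finset (Set X)} (hW : IsCover W)
    (hWm : ∀ A ∈ W, MeasurableSet A) : coverEnt μ W ≤ Real.log (coverNum W) := by
  obtain ⟨F, hFW, hFcard, hF⟩ := exists_subcover_card_eq_coverNum hW
  obtain ⟨R, hR, hRF, hRcard⟩ :=
    exists_isBorelPartition_refines_card_le hF fun A hA => hWm A (hFW hA)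
  calc coverEnt μ W ≤ partEnt μ R := coverEnt_le_partEnt μ hR (hRF.trans (.of_subset hFW))
    _ ≤ Real.log R.card := hR.partEnt_le_log_card μ
    _ ≤ Real.log (coverNum W) := by
      rw [← hFcard]
      rcases R.card.eq_zero_or_pos with h | h
      · rw [h, Nat.cast_zero, Real.log_zero]
        exact Real.log_natCast_nonneg _
      · exact Real.log_le_log (by exact_mod_cast h) (by exact_mod_cast hRcard)

end Measure

end Covers

theorem stmt8_general {X : Type*} [MetricSpace X]
    [MeasurableSpace X] [BorelSpace X]
    (T : X → X) (hT : Continuous T)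
    (μ : Measure X) [IsProbabilityMeasure μ]
    (U : Finset (Set X)) (hUc : IsCover U) (hUb : ∀ A ∈ U, MeasurableSet A)
    (a b : ℝ)
    (ha : Tendsto (fun n : ℕ => coverEnt μ (dynJoin T U n) / n) atTop (nhds a))
    (hb : Tendsto (fun n : ℕ => Real.log (coverNum (dynJoin T U n)) / n) atTop (nhds b)) :
    a ≤ b :=
  le_of_tendsto_of_tendsto' ha hb fun n =>
    div_le_div_of_nonneg_right (coverEnt_le_log_coverNum μ (hUc.dynJoin T n)
      (measurableSet_of_mem_dynJoin hT.measurable hUb n)) n.cast_nonneg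

theorem stmt8 {X : Type*} [MetricSpace X] [CompactSpace X]
    [MeasurableSpace X] [BorelSpace X]
    (T : X → X) (hT : Continuous T)
    (μ : Measure X) [IsProbabilityMeasure μ]
    (hinv : ∀ A : Set X, MeasurableSet A → μ (T ⁻¹' A) = μ A)
    (U : Finset (Set X)) (hUc : IsCover U) (hUb : ∀ A ∈ U, MeasurableSet A)
    (a b : ℝ)
    (ha : Tendsto (fun n : ℕ => coverEnt μ (dynJoin T U n) / n) atTop (nhds a))
    (hb : Tendsto (fun n : ℕ => Real.log (coverNum (dynJoin T U n)) / n) atTop (nhds b)) :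
    a ≤ b :=
  stmt8_general T hT μ U hUc hUb a b ha hb
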